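/- For a static point charge (u = (1,0,0,0)) the degree-(−4) term of the electromagnetic stress tensor satisfies (T^{i0})_{−4} = 0 and (T^{ij})_{−4}(x) = (q²/(4π)²|x|⁴)( (1/2)δ^{ij} − x^i x^j/|x|² ), and for any vectors v', b ∈ ℝ³, r ∫_{|x|=r} dΩ_x ∫_{−x·v'}^{0} dx⁰ x_i (T^{iν})_{−4} b_ν = −(q²/24πr)(v'·b). -/

import Mathlib

open MeasureTheory

/-- Metric signs `g = diag(−1,1,1,1)`. -/
noncomputable def eta : Fin 4 → ℝ := ![-1, 1, 1, 1]

/-- Rest-frame four-velocity `u = (1,0,0,0)`. -/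
noncomputable def u0 : Fin 4 → ℝ := ![1, 0, 0, 0]

/-- Spatial vector promoted to a four-vector with vanishing time component. -/
noncomputable def fourVec (x : EuclideanSpace ℝ (Fin 3)) : Fin 4 → ℝ :=
  ![0, x 0, x 1, x 2]

/-- Degree-`(−2)` Coulomb field of a static point charge `q` at the origin:
`(F^{μν})_{−2} = (q/4π|x|³)(u^μ x^ν − u^ν x^μ)` with `u = (1,0,0,0)`; in
particular `(F^{0i})_{−2} = (q/4π) xⁱ/|x|³` and `(F^{ij})_{−2} = 0`. -/
noncomputable def Fneg2 (q : ℝ) (x : EuclideanSpace ℝ (Fin 3)) (μ ν : Fin 4) : ℝ :=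
  (q / (4 * Real.pi * ‖x‖ ^ 3)) * (u0 μ * fourVec x ν - u0 ν * fourVec x μ)

/-- Degree-`(−4)` part of the electromagnetic stress tensor
`T^{μν} = F^{μλ}F^ν_λ − (1/4) g^{μν} F^{ηλ}F_{ηλ}`, built from `Fneg2`. -/
noncomputable def Tneg4 (q : ℝ) (x : EuclideanSpace ℝ (Fin 3)) (μ ν : Fin 4) : ℝ :=
  (∑ lam : Fin 4, eta lam * Fneg2 q x μ lam * Fneg2 q x ν lam) -
    (1 / 4) * (if μ = ν then eta μ else 0) *
      ∑ α : Fin 4, ∑ β : Fin 4, eta α * eta β * (Fneg2 q x α β) ^ 2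

open Real Set Metric

lemma normsq (x : EuclideanSpace ℝ (Fin 3)) : ‖x‖ ^ 2 = x 0 ^ 2 + x 1 ^ 2 + x 2 ^ 2 := by
  rw [EuclideanSpace.norm_eq, Real.sq_sqrt (by positivity)]
  simp [Fin.sum_univ_three]

lemma part1 (q : ℝ) (x : EuclideanSpace ℝ (Fin 3)) (i : Fin 3) : Tneg4 q x i.succ 0 = 0 := by
  fin_cases i <;>
    simp [Tneg4, Fneg2, u0, fourVec, eta, Fin.sum_univ_four, Fin.succ_ne_zero]

lemma part2 (q : ℝ) (x : EuclideanSpace ℝ (Fin 3)) (hx : x ≠ 0) (i j : Fin 3) :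
    Tneg4 q x i.succ j.succ
      = (q ^ 2 / ((4 * Real.pi) ^ 2 * ‖x‖ ^ 4)) *
          ((if i = j then (1 : ℝ) / 2 else 0) - x i * x j / ‖x‖ ^ 2) := by
  have hn : ‖x‖ ≠ 0 := norm_ne_zero_iff.mpr hx
  have h2 := normsq x
  have hpi := Real.pi_ne_zero
  have L : Tneg4 q x i.succ j.succ = (q / (4 * Real.pi * ‖x‖ ^ 3))^2 *
      ((x 0^2 + x 1^2 + x 2^2) * (if i = j then (1:ℝ)/2 else 0) - x i * x j) := by
    fin_cases i <;> fin_cases j <;>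
      simp [Tneg4, Fneg2, eta, u0, fourVec, Fin.sum_univ_four, Fin.succ_ne_zero, Fin.ext_iff] <;> ring
  rw [L, ← h2]
  generalize (if i = j then (1:ℝ)/2 else 0) = d
  field_simp


lemma gamma52 : Real.Gamma (5/2) = 3/4 * Real.sqrt Real.pi := by
  rw [show (5:ℝ)/2 = 3/2 + 1 by norm_num, Real.Gamma_add_one (by norm_num),
    show (3:ℝ)/2 = 1/2 + 1 by norm_num, Real.Gamma_add_one (by norm_num),
    Real.Gamma_one_half_eq]
  ring

lemma radial_int : ∫ r in Ioi (0:ℝ), r^(4:ℕ) * Real.exp (-r^(2:ℕ)) = 3/8 * Real.sqrt Real.pi := by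
  have h := integral_rpow_mul_exp_neg_rpow (p := 2) (q := 4) (by norm_num) (by norm_num)
  norm_num [gamma52] at h
  rw [show (3:ℝ)/8 * Real.sqrt Real.pi = 1/2 * (3/4 * Real.sqrt Real.pi) by ring, ← h]

lemma radial_meas : ∫ r : (Ioi (0:ℝ)), ((r:ℝ)^2 * Real.exp (-(r:ℝ)^2))
    ∂(MeasureTheory.Measure.volumeIoiPow 2) = 3/8 * Real.sqrt Real.pi := by
  simp only [MeasureTheory.Measure.volumeIoiPow, ENNReal.ofReal]
  rw [integral_withDensity_eq_integral_smul
    ((measurable_subtype_coe.pow_const _).real_toNNReal),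
    integral_subtype_comap measurableSet_Ioi
      (fun a : ℝ => Real.toNNReal (a ^ 2) • (a^2 * Real.exp (-a^2))),
    setIntegral_congr_fun measurableSet_Ioi
      (g := fun r : ℝ => r^(4:ℕ) * Real.exp (-r^(2:ℕ)))
      (fun x hx => by
        rw [NNReal.smul_def, Real.coe_toNNReal _ (by positivity), smul_eq_mul]; ring),
    radial_int]

lemma g0 : ∫ x : ℝ, Real.exp (-x^2) = Real.sqrt Real.pi := by
  simpa using integral_gaussian 1

lemma g1 : ∫ x : ℝ, x * Real.exp (-x^2) = 0 := by
  have h := integral_neg_eq_self (fun x : ℝ => x * Real.exp (-x^2)) volume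
  simp only [neg_mul, neg_neg, neg_sq, integral_neg] at h
  linarith [h]

lemma g2 : ∫ x : ℝ, x^2 * Real.exp (-x^2) = Real.sqrt Real.pi / 2 := by
  have h2 : ∫ t in Ioi (0:ℝ), t^(2:ℕ) * Real.exp (-t^(2:ℕ)) = Real.sqrt Real.pi / 4 := by
    have h := integral_rpow_mul_exp_neg_rpow (p := 2) (q := 2) (by norm_num) (by norm_num)
    have hg : Real.Gamma (((2:ℝ)+1)/2) = 1/2 * Real.sqrt Real.pi := by
      rw [show ((2:ℝ)+1)/2 = 1/2 + 1 by norm_num, Real.Gamma_add_one (by norm_num),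
        Real.Gamma_one_half_eq]
    rw [hg] at h
    rw [show Real.sqrt Real.pi / 4 = 1/2 * (1/2 * Real.sqrt Real.pi) by ring, ← h]
    refine setIntegral_congr_fun measurableSet_Ioi (fun r hr => ?_)
    rw [← Real.rpow_natCast r 2]
    norm_num
  have := integral_comp_abs (f := fun t : ℝ => t^2 * Real.exp (-t^2))
  simp only [sq_abs] at this
  rw [this, h2]
  ring

lemma normsq' (x : EuclideanSpace ℝ (Fin 3)) : ‖x‖ ^ 2 = x 0 ^ 2 + x 1 ^ 2 + x 2 ^ 2 := by
  rw [EuclideanSpace.norm_eq, Real.sq_sqrt (by positivity)]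
  simp [Fin.sum_univ_three]

lemma euc_moment (i j : Fin 3) :
    ∫ x : EuclideanSpace ℝ (Fin 3), x i * x j * Real.exp (-‖x‖^2)
      = if i = j then Real.pi * Real.sqrt Real.pi / 2 else 0 := by
  have mp := (EuclideanSpace.volume_preserving_symm_measurableEquiv_toLp (Fin 3)).symm
  rw [← mp.integral_comp (MeasurableEquiv.measurableEmbedding _)]
  have hsymm : ∀ (y : Fin 3 → ℝ) (k : Fin 3),
      ((MeasurableEquiv.toLp 2 (Fin 3 → ℝ)).symm.symm y) k = y k := fun y k => rfl
  by_cases hij : i = j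
  · subst hij
    simp only [if_pos rfl]
    have hrw : ∀ y : Fin 3 → ℝ,
        ((MeasurableEquiv.toLp 2 (Fin 3 → ℝ)).symm.symm y) i *
          ((MeasurableEquiv.toLp 2 (Fin 3 → ℝ)).symm.symm y) i *
          Real.exp (-‖(MeasurableEquiv.toLp 2 (Fin 3 → ℝ)).symm.symm y‖^2)
        = ∏ k : Fin 3, (fun k (t : ℝ) =>
            if k = i then t^2 * Real.exp (-t^2) else Real.exp (-t^2)) k (y k) := by
      intro y
      rw [hsymm, normsq']
      simp only [hsymm]
      rw [show -(y 0^2 + y 1^2 + y 2^2) = (-(y 0^2)) + (-(y 1^2)) + (-(y 2^2)) by ring,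
        Real.exp_add, Real.exp_add, Fin.prod_univ_three]
      fin_cases i <;> simp <;> ring
    simp only [hrw]
    rw [MeasureTheory.volume_pi, MeasureTheory.integral_fintype_prod_eq_prod (ι := Fin 3)
      (fun k (t : ℝ) => if k = i then t^2 * Real.exp (-t^2) else Real.exp (-t^2)),
      Fin.prod_univ_three]
    have hpi : Real.sqrt Real.pi * Real.sqrt Real.pi = Real.pi :=
      Real.mul_self_sqrt Real.pi_pos.le
    fin_cases i <;> simp [g0, g2] <;> linear_combination (Real.sqrt Real.pi / 2) * hpi
  · rw [if_neg hij]
    have hrw : ∀ y : Fin 3 → ℝ,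
        ((MeasurableEquiv.toLp 2 (Fin 3 → ℝ)).symm.symm y) i *
          ((MeasurableEquiv.toLp 2 (Fin 3 → ℝ)).symm.symm y) j *
          Real.exp (-‖(MeasurableEquiv.toLp 2 (Fin 3 → ℝ)).symm.symm y‖^2)
        = ∏ k : Fin 3, (fun k (t : ℝ) =>
            if k = i then t * Real.exp (-t^2)
            else if k = j then t * Real.exp (-t^2) else Real.exp (-t^2)) k (y k) := by
      intro y
      rw [hsymm, hsymm, normsq']
      simp only [hsymm]
      rw [show -(y 0^2 + y 1^2 + y 2^2) = (-(y 0^2)) + (-(y 1^2)) + (-(y 2^2)) by ring,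
        Real.exp_add, Real.exp_add, Fin.prod_univ_three]
      fin_cases i <;> fin_cases j <;> first
        | exact absurd rfl hij
        | (simp [Fin.ext_iff]; ring)
    simp only [hrw]
    rw [MeasureTheory.volume_pi, MeasureTheory.integral_fintype_prod_eq_prod (ι := Fin 3)
      (fun k (t : ℝ) => if k = i then t * Real.exp (-t^2)
            else if k = j then t * Real.exp (-t^2) else Real.exp (-t^2)),
      Fin.prod_univ_three]
    fin_cases i <;> fin_cases j <;> first
      | exact absurd rfl hij
      | (simp [Fin.ext_iff, g1])

open Metric in
lemma sphere_moment (i j : Fin 3) :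
    ∫ ω : sphere (0 : EuclideanSpace ℝ (Fin 3)) 1,
        ((ω : EuclideanSpace ℝ (Fin 3)) i * (ω : EuclideanSpace ℝ (Fin 3)) j)
        ∂((volume : Measure (EuclideanSpace ℝ (Fin 3))).toSphere)
      = if i = j then 4 * Real.pi / 3 else 0 := by
  have key := (volume : Measure (EuclideanSpace ℝ (Fin 3))).measurePreserving_homeomorphUnitSphereProd
  have hdim : Module.finrank ℝ (EuclideanSpace ℝ (Fin 3)) = 3 := finrank_euclideanSpace_fin
  rw [hdim] at key
  set F : sphere (0:EuclideanSpace ℝ (Fin 3)) 1 × Ioi (0:ℝ) → ℝ := fun p =>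
    ((p.1 : EuclideanSpace ℝ (Fin 3)) i * (p.1 : EuclideanSpace ℝ (Fin 3)) j) *
      ((p.2:ℝ)^2 * Real.exp (-(p.2:ℝ)^2)) with hF
  have step1 : ∫ x : EuclideanSpace ℝ (Fin 3), x i * x j * Real.exp (-‖x‖^2)
      = ∫ x : ({0}ᶜ : Set (EuclideanSpace ℝ (Fin 3))),
          ((x:EuclideanSpace ℝ (Fin 3)) i * (x:EuclideanSpace ℝ (Fin 3)) j *
            Real.exp (-‖(x:EuclideanSpace ℝ (Fin 3))‖^2))
          ∂((volume : Measure (EuclideanSpace ℝ (Fin 3))).comap (↑)) := by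
    rw [integral_subtype_comap (measurableSet_singleton (0:EuclideanSpace ℝ (Fin 3))).compl
      (fun x : EuclideanSpace ℝ (Fin 3) => x i * x j * Real.exp (-‖x‖^2)),
      restrict_compl_singleton]
  have step2 : ∫ x : ({0}ᶜ : Set (EuclideanSpace ℝ (Fin 3))),
          ((x:EuclideanSpace ℝ (Fin 3)) i * (x:EuclideanSpace ℝ (Fin 3)) j *
            Real.exp (-‖(x:EuclideanSpace ℝ (Fin 3))‖^2))
          ∂((volume : Measure (EuclideanSpace ℝ (Fin 3))).comap (↑))
      = ∫ p, F p ∂((volume : Measure (EuclideanSpace ℝ (Fin 3))).toSphere.prod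
          (Measure.volumeIoiPow 2)) := by
    rw [← key.integral_comp (Homeomorph.measurableEmbedding _) F]
    refine integral_congr_ae (Filter.Eventually.of_forall fun x => ?_)
    have hx : (x : EuclideanSpace ℝ (Fin 3)) ≠ 0 := x.2
    have hn : ‖(x:EuclideanSpace ℝ (Fin 3))‖ ≠ 0 := norm_ne_zero_iff.mpr hx
    have hsmul : ∀ k : Fin 3,
        ((‖(x:EuclideanSpace ℝ (Fin 3))‖⁻¹ • (x:EuclideanSpace ℝ (Fin 3))) k)
          = ‖(x:EuclideanSpace ℝ (Fin 3))‖⁻¹ * (x:EuclideanSpace ℝ (Fin 3)) k :=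
      fun k => rfl
    simp only [hF, homeomorphUnitSphereProd_apply_fst_coe,
      homeomorphUnitSphereProd_apply_snd_coe, hsmul]
    field_simp
  have step3 : ∫ p, F p ∂((volume : Measure (EuclideanSpace ℝ (Fin 3))).toSphere.prod
          (Measure.volumeIoiPow 2))
      = (∫ ω : sphere (0:EuclideanSpace ℝ (Fin 3)) 1,
            ((ω : EuclideanSpace ℝ (Fin 3)) i * (ω : EuclideanSpace ℝ (Fin 3)) j)
            ∂((volume : Measure (EuclideanSpace ℝ (Fin 3))).toSphere)) *
        (∫ r : (Ioi (0:ℝ)), ((r:ℝ)^2 * Real.exp (-(r:ℝ)^2)) ∂(Measure.volumeIoiPow 2)) :=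
    integral_prod_mul (fun ω : sphere (0:EuclideanSpace ℝ (Fin 3)) 1 =>
        (ω : EuclideanSpace ℝ (Fin 3)) i * (ω : EuclideanSpace ℝ (Fin 3)) j)
      (fun r : (Ioi (0:ℝ)) => (r:ℝ)^2 * Real.exp (-(r:ℝ)^2))
  have hval := euc_moment i j
  rw [step1, step2, step3, radial_meas] at hval
  have h38 : (3:ℝ)/8 * Real.sqrt Real.pi ≠ 0 := by positivity
  refine mul_right_cancel₀ h38 ?_
  rw [hval]
  by_cases hij : i = j
  · rw [if_pos hij, if_pos hij]; ring
  · rw [if_neg hij, if_neg hij]; ring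

lemma inner_eval (x y : EuclideanSpace ℝ (Fin 3)) :
    (inner ℝ x y : ℝ) = x 0 * y 0 + x 1 * y 1 + x 2 * y 2 := by
  simp [PiLp.inner_apply, RCLike.inner_apply, Fin.sum_univ_three]
  ring

lemma cont_eval (k : Fin 3) :
    Continuous (fun ω : sphere (0 : EuclideanSpace ℝ (Fin 3)) 1 =>
      (ω : EuclideanSpace ℝ (Fin 3)) k) := by
  exact (continuous_apply k).comp (Continuous.comp (PiLp.continuous_ofLp 2 _) continuous_subtype_val)

lemma S_eval (q r : ℝ) (hr : 0 < r) (b0 : ℝ) (bsp : EuclideanSpace ℝ (Fin 3))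
    (ω : sphere (0 : EuclideanSpace ℝ (Fin 3)) 1) :
    (∑ i : Fin 3, ∑ ν : Fin 4,
        (r • (ω : EuclideanSpace ℝ (Fin 3))) i *
          Tneg4 q (r • (ω : EuclideanSpace ℝ (Fin 3))) i.succ ν *
          (eta ν * (![b0, bsp 0, bsp 1, bsp 2] : Fin 4 → ℝ) ν))
    = -(q^2/(32*Real.pi^2*r^3)) *
        ((ω : EuclideanSpace ℝ (Fin 3)) 0 * bsp 0 +
         (ω : EuclideanSpace ℝ (Fin 3)) 1 * bsp 1 +
         (ω : EuclideanSpace ℝ (Fin 3)) 2 * bsp 2) := by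
  set x : EuclideanSpace ℝ (Fin 3) := r • (ω : EuclideanSpace ℝ (Fin 3)) with hxdef
  have hωn : ‖(ω : EuclideanSpace ℝ (Fin 3))‖ = 1 := by
    simpa [mem_sphere_zero_iff_norm] using ω.2
  have hxn : ‖x‖ = r := by
    rw [hxdef, norm_smul, hωn, mul_one, Real.norm_eq_abs, abs_of_pos hr]
  have hxne : x ≠ 0 := by
    intro h; rw [h] at hxn; simp at hxn; exact hr.ne' hxn.symm
  have hxk : ∀ k : Fin 3, x k = r * (ω : EuclideanSpace ℝ (Fin 3)) k := fun k => rfl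
  have hpi := Real.pi_ne_zero
  have hrne := hr.ne'
  have hω2 : (ω : EuclideanSpace ℝ (Fin 3)) 0 ^ 2 + (ω : EuclideanSpace ℝ (Fin 3)) 1 ^ 2 +
      (ω : EuclideanSpace ℝ (Fin 3)) 2 ^ 2 = 1 := by
    have h := normsq (ω : EuclideanSpace ℝ (Fin 3))
    rw [hωn] at h
    simpa using h.symm
  set K : ℝ := q ^ 2 / ((4 * Real.pi) ^ 2 * r ^ 4) with hK
  have hT : ∀ a b : Fin 3, Tneg4 q x a.succ b.succ
      = K * ((if a = b then (1:ℝ)/2 else 0) -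
          (ω : EuclideanSpace ℝ (Fin 3)) a * (ω : EuclideanSpace ℝ (Fin 3)) b) := by
    intro a b
    rw [part2 q x hxne, hxn, hxk, hxk, hK]
    congr 1
    field_simp
  have hRHS : -(q^2/(32*Real.pi^2*r^3)) = -(K * r / 2) := by
    rw [hK]; field_simp; ring
  rw [hRHS]
  have e1 : (1 : Fin 4) = Fin.succ (0 : Fin 3) := rfl
  have e2 : (2 : Fin 4) = Fin.succ (1 : Fin 3) := rfl
  have e3 : (3 : Fin 4) = Fin.succ (2 : Fin 3) := rfl
  simp only [Fin.sum_univ_three, Fin.sum_univ_four, eta, Matrix.cons_val_zero,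
    Matrix.cons_val_one, Matrix.head_cons, Matrix.cons_val_two, Matrix.tail_cons,
    Matrix.cons_val_three]
  rw [e1, e2, e3]
  simp only [part1 q x, hT, hxk]
  norm_num [Fin.ext_iff]
  linear_combination (-(K * r) * ((ω : EuclideanSpace ℝ (Fin 3)) 0 * bsp 0 +
    (ω : EuclideanSpace ℝ (Fin 3)) 1 * bsp 1 +
    (ω : EuclideanSpace ℝ (Fin 3)) 2 * bsp 2)) * hω2

/-- For a static point charge: `(T^{i0})_{−4} = 0`,
`(T^{ij})_{−4} = (q²/(4π)²|x|⁴)((1/2)δ^{ij} − xⁱxʲ/|x|²)`, and for any `v', b`,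
`r ∫_{|x|=r} dΩ_x ∫_{−x·v'}^0 dx⁰ x_i (T^{iν})_{−4} b_ν = −(q²/24πr)(v'·b)`.
The solid-angle measure is `volume.toSphere` on the unit sphere (total `4π`),
with `x = r • ω`; `b_ν = g_{νμ} b^μ` for the four-vector `b = (b⁰, 𝐛)`. -/
theorem static_stress_tensor_integrals (q : ℝ)
    (v' bsp : EuclideanSpace ℝ (Fin 3)) (b0 : ℝ) :
    (∀ x : EuclideanSpace ℝ (Fin 3), x ≠ 0 → ∀ i : Fin 3,
        Tneg4 q x i.succ 0 = 0) ∧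
    (∀ x : EuclideanSpace ℝ (Fin 3), x ≠ 0 → ∀ i j : Fin 3,
        Tneg4 q x i.succ j.succ
          = (q ^ 2 / ((4 * Real.pi) ^ 2 * ‖x‖ ^ 4)) *
              ((if i = j then (1 : ℝ) / 2 else 0) - x i * x j / ‖x‖ ^ 2)) ∧
    (∀ r : ℝ, 0 < r →
        r * ∫ ω, (∫ t in
              (-(inner ℝ (r • (ω : EuclideanSpace ℝ (Fin 3))) v' : ℝ))..(0 : ℝ),
            ∑ i : Fin 3, ∑ ν : Fin 4,
              (r • (ω : EuclideanSpace ℝ (Fin 3))) i *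
                Tneg4 q (r • (ω : EuclideanSpace ℝ (Fin 3))) i.succ ν *
                (eta ν * (![b0, bsp 0, bsp 1, bsp 2] : Fin 4 → ℝ) ν))
          ∂((volume : Measure (EuclideanSpace ℝ (Fin 3))).toSphere)
        = -(q ^ 2 / (24 * Real.pi * r)) * (inner ℝ v' bsp : ℝ)) := by
  refine ⟨fun x _ i => part1 q x i, fun x hx i j => part2 q x hx i j, fun r hr => ?_⟩
  have hpi := Real.pi_ne_zero
  have hrne := hr.ne'
  set Wv : sphere (0 : EuclideanSpace ℝ (Fin 3)) 1 → ℝ := fun ω =>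
    (ω : EuclideanSpace ℝ (Fin 3)) 0 * v' 0 + (ω : EuclideanSpace ℝ (Fin 3)) 1 * v' 1 +
      (ω : EuclideanSpace ℝ (Fin 3)) 2 * v' 2 with hWv
  set Wb : sphere (0 : EuclideanSpace ℝ (Fin 3)) 1 → ℝ := fun ω =>
    (ω : EuclideanSpace ℝ (Fin 3)) 0 * bsp 0 + (ω : EuclideanSpace ℝ (Fin 3)) 1 * bsp 1 +
      (ω : EuclideanSpace ℝ (Fin 3)) 2 * bsp 2 with hWb
  have hpt : ∀ ω : sphere (0 : EuclideanSpace ℝ (Fin 3)) 1,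
      (∫ t in (-(inner ℝ (r • (ω : EuclideanSpace ℝ (Fin 3))) v' : ℝ))..(0 : ℝ),
        ∑ i : Fin 3, ∑ ν : Fin 4,
          (r • (ω : EuclideanSpace ℝ (Fin 3))) i *
            Tneg4 q (r • (ω : EuclideanSpace ℝ (Fin 3))) i.succ ν *
            (eta ν * (![b0, bsp 0, bsp 1, bsp 2] : Fin 4 → ℝ) ν))
      = (-(q^2/(32*Real.pi^2*r^2))) * (Wv ω * Wb ω) := by
    intro ω
    rw [intervalIntegral.integral_const, S_eval q r hr b0 bsp ω, smul_eq_mul]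
    have hin : (inner ℝ (r • (ω : EuclideanSpace ℝ (Fin 3))) v' : ℝ) = r * Wv ω := by
      rw [inner_eval, hWv]
      have h : ∀ k : Fin 3, (r • (ω : EuclideanSpace ℝ (Fin 3))) k
          = r * (ω : EuclideanSpace ℝ (Fin 3)) k := fun k => rfl
      rw [h, h, h]; ring
    rw [hin, hWb]
    field_simp
    ring
  rw [integral_congr_ae (Filter.Eventually.of_forall hpt)]
  have hint : ∀ k l : Fin 3, Integrable (fun ω : sphere (0 : EuclideanSpace ℝ (Fin 3)) 1 =>
      v' k * bsp l * ((ω : EuclideanSpace ℝ (Fin 3)) k * (ω : EuclideanSpace ℝ (Fin 3)) l))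
      ((volume : Measure (EuclideanSpace ℝ (Fin 3))).toSphere) := fun k l =>
    ((((cont_eval k).mul (cont_eval l))).integrable_of_hasCompactSupport
      (HasCompactSupport.of_compactSpace _)).const_mul _
  have hexp : ∀ ω : sphere (0 : EuclideanSpace ℝ (Fin 3)) 1,
      (-(q^2/(32*Real.pi^2*r^2))) * (Wv ω * Wb ω)
      = (-(q^2/(32*Real.pi^2*r^2))) * ∑ k : Fin 3, ∑ l : Fin 3,
          v' k * bsp l * ((ω : EuclideanSpace ℝ (Fin 3)) k * (ω : EuclideanSpace ℝ (Fin 3)) l) := by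
    intro ω
    rw [hWv, hWb]
    simp only [Fin.sum_univ_three]
    ring
  rw [integral_congr_ae (Filter.Eventually.of_forall hexp), integral_const_mul,
    integral_finset_sum _ (fun k _ => integrable_finset_sum _ (fun l _ => hint k l))]
  have : ∀ k : Fin 3, ∫ ω, (∑ l : Fin 3,
      v' k * bsp l * ((ω : EuclideanSpace ℝ (Fin 3)) k * (ω : EuclideanSpace ℝ (Fin 3)) l))
      ∂((volume : Measure (EuclideanSpace ℝ (Fin 3))).toSphere)
      = ∑ l : Fin 3, v' k * bsp l * (if k = l then 4 * Real.pi / 3 else 0) := by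
    intro k
    rw [integral_finset_sum _ (fun l _ => hint k l)]
    refine Finset.sum_congr rfl (fun l _ => ?_)
    rw [integral_const_mul, sphere_moment k l]
  simp only [this]
  rw [inner_eval]
  simp only [Fin.sum_univ_three]
  norm_num [Fin.ext_iff]
  field_simp
  ring
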